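/- arXiv:1302.6427 — 2 statements merged into one kernel-verified Lean document; each statement's English description precedes it below -/
import Mathlib

section
/- Let X be a real random variable with distribution function 𝔽, let X₁,…,X_n be i.i.d. copies of X, let 0 < q < 1, and suppose ξ > ξ_q (the q-quantile). Set δ₁ = 𝔽(ξ) − q. Then the empirical quantile ξ̂_q satisfies: (i) ℙⁿ(ξ̂_q > ξ) ≤ exp(−2nδ₁²); (ii) ℙⁿ(ξ̂_q > ξ) ≤ exp(−nδ₁²/(2(1 − 𝔽(ξ)) + (2/3)δ₁)); (iii) ℙⁿ(ξ̂_q > ξ) ≤ exp(−nδ₁²/(2𝔽(ξ))). -/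
open MeasureTheory Real

/-- The distribution function `𝔽(ξ) = ℙ(X ≤ ξ)` of a law `μ` on `ℝ`. -/
noncomputable def distFun (μ : MeasureTheory.Measure ℝ) (ξ : ℝ) : ℝ :=
  (μ (Set.Iic ξ)).toReal

/-- The `q`-quantile `ξ_q = inf {ξ : 𝔽(ξ) ≥ q}`. -/
noncomputable def quantile (μ : MeasureTheory.Measure ℝ) (q : ℝ) : ℝ :=
  sInf {ξ : ℝ | q ≤ distFun μ ξ}

/-- The empirical distribution function of the samples `ω : Fin n → ℝ`. -/
noncomputable def empDistFun {n : ℕ} (ω : Fin n → ℝ) (ξ : ℝ) : ℝ :=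
  ((Finset.univ.filter fun i => ω i ≤ ξ).card : ℝ) / n

/-- The empirical `q`-quantile `ξ̂_q = inf {ξ : 𝔽_n(ξ) ≥ q}`. -/
noncomputable def empQuantile {n : ℕ} (ω : Fin n → ℝ) (q : ℝ) : ℝ :=
  sInf {ξ : ℝ | q ≤ empDistFun ω ξ}

/-!
On the event `ξ < ξ̂_q` the empirical distribution function at `ξ` is below `q`: fewer than `qn`
of the samples fall in `(-∞, ξ]`, a binomial count with success probability `p = 𝔽(ξ) ≥ q`.
The Chernoff bound gives the probability at most `exp (n (t q + log (1 - p + p e⁻ᵗ)))` for every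
`t ≥ 0`. The optimal `t` turns the exponent into `-n KL(q ‖ p)`, and comparing derivatives in `p`
shows `KL(q ‖ p) ≥ 2 (p - q)²` and `KL(q ‖ p) ≥ (p - q)² / (2p)`. The Bernstein form uses instead
`eᵗ ≤ 1 + t + t² / (2 (1 - t/3))` at `t = 3δ₁ / (3 (1 - p) + δ₁)`. For `p = 1` the exponent is
`-t (1 - q)`, which is arbitrarily negative.
-/

open Set Filter ProbabilityTheory

lemma distFun_eq_cdf (μ : Measure ℝ) [IsProbabilityMeasure μ] : distFun μ = cdf μ :=
  funext fun ξ => (cdf_eq_real μ ξ).symm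

lemma distFun_le_one (μ : Measure ℝ) [IsProbabilityMeasure μ] (ξ : ℝ) : distFun μ ξ ≤ 1 :=
  distFun_eq_cdf μ ▸ cdf_le_one μ ξ

lemma le_distFun_of_quantile_lt (μ : Measure ℝ) [IsProbabilityMeasure μ] {q ξ : ℝ}
    (hq0 : 0 < q) (hq1 : q < 1) (hξ : quantile μ q < ξ) : q ≤ distFun μ ξ := by
  rw [quantile] at hξ
  rw [distFun_eq_cdf] at hξ ⊢
  have hne : {η | q ≤ cdf μ η}.Nonempty :=
    ((tendsto_cdf_atTop μ).eventually (eventually_ge_nhds hq1)).exists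
  obtain ⟨η₀, hη₀⟩ := eventually_atBot.1 ((tendsto_cdf_atBot μ).eventually (eventually_lt_nhds hq0))
  have hbdd : BddBelow {η | q ≤ cdf μ η} :=
    ⟨η₀, fun η hη => not_lt.1 fun h => (hη₀ η h.le).not_ge hη⟩
  obtain ⟨η, hη, hηξ⟩ := (csInf_lt_iff hbdd hne).1 hξ
  exact hη.trans (monotone_cdf μ hηξ.le)

lemma exists_le_of_le_empDistFun {n : ℕ} {ω : Fin n → ℝ} {q η : ℝ} (hq : 0 < q)
    (h : q ≤ empDistFun ω η) : ∃ i, ω i ≤ η := by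
  by_contra! hlt
  have : empDistFun ω η = 0 := by
    simp [empDistFun, Finset.filter_false_of_mem fun i _ => not_le.2 (hlt i)]
  linarith

lemma empDistFun_lt_of_lt_empQuantile {n : ℕ} {ω : Fin n → ℝ} {q ξ : ℝ} (hq : 0 < q)
    (h : ξ < empQuantile ω q) : empDistFun ω ξ < q := by
  by_contra! hξ
  have hbdd : BddBelow {η | q ≤ empDistFun ω η} := ⟨⨅ i, ω i, fun η hη =>
    have ⟨i, hi⟩ := exists_le_of_le_empDistFun hq hη
    (ciInf_le (Finite.bddBelow_range ω) i).trans hi⟩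
  exact (csInf_le hbdd hξ).not_gt h

lemma empDistFun_eq_sum_indicator {n : ℕ} (ω : Fin n → ℝ) (ξ : ℝ) :
    empDistFun ω ξ = (∑ i, (Iic ξ).indicator 1 (ω i)) / n := by
  rw [empDistFun, Finset.card_filter]
  push_cast
  simp only [Set.indicator_apply, mem_Iic, Pi.one_apply]

lemma mgf_indicator_Iic (μ : Measure ℝ) [IsProbabilityMeasure μ] (ξ t : ℝ) :
    mgf ((Iic ξ).indicator 1) μ t = 1 - distFun μ ξ + distFun μ ξ * exp t := by
  have h : (fun x => exp (t * (Iic ξ).indicator 1 x))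
      = fun x => (Iic ξ).indicator (fun _ => exp t - 1) x + 1 := by
    funext x; by_cases hx : x ≤ ξ <;> simp [hx]
  rw [mgf, h, integral_add ((integrable_const _).indicator measurableSet_Iic) (integrable_const 1),
    integral_indicator_const _ measurableSet_Iic, distFun]
  simp only [measureReal_def, smul_eq_mul, integral_const, measure_univ, ENNReal.toReal_one,
    mul_one]
  ring

lemma mgf_sum_indicator_Iic_pi (μ : Measure ℝ) [IsProbabilityMeasure μ] (n : ℕ) (ξ t : ℝ) :
    mgf (fun ω : Fin n → ℝ => ∑ i, (Iic ξ).indicator 1 (ω i)) (Measure.pi fun _ => μ) t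
      = (1 - distFun μ ξ + distFun μ ξ * exp t) ^ n := by
  simp_rw [mgf, Finset.mul_sum, exp_sum]
  rw [integral_fintype_prod_eq_pow (fun x => exp (t * (Iic ξ).indicator 1 x)), Fintype.card_fin,
    ← mgf_indicator_Iic]
  rfl

/-- `log 𝔼 exp (-t (𝟙{X ≤ ξ} - q))` for a single sample with `𝔽(ξ) = p`. -/
noncomputable def chernoffExponent (q p t : ℝ) : ℝ := t * q + log (1 - p + p * exp (-t))

lemma measureReal_empDistFun_lt_le (μ : Measure ℝ) [IsProbabilityMeasure μ] (n : ℕ) (ξ q : ℝ)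
    {t : ℝ} (ht : 0 ≤ t) :
    (Measure.pi fun _ : Fin n => μ).real {ω | empDistFun ω ξ < q}
      ≤ exp (n * chernoffExponent q (distFun μ ξ) t) := by
  set S : (Fin n → ℝ) → ℝ := fun ω => ∑ i, (Iic ξ).indicator 1 (ω i)
  have hS : Measurable S := Finset.measurable_sum _ fun i _ =>
    (measurable_one.indicator measurableSet_Iic).comp (measurable_pi_apply i)
  have hsub : {ω | empDistFun ω ξ < q} ⊆ {ω | S ω ≤ q * n} := by
    intro ω (hω : empDistFun ω ξ < q)
    rw [empDistFun_eq_sum_indicator] at hω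
    rcases n.eq_zero_or_pos with rfl | hn
    · simp [S]
    · exact ((div_lt_iff₀ (Nat.cast_pos.2 hn)).1 hω).le
  have hint : Integrable (fun ω => exp (-t * S ω)) (Measure.pi fun _ : Fin n => μ) := by
    refine .of_bound (by fun_prop) 1 (ae_of_all _ fun ω => ?_)
    have : 0 ≤ S ω := Finset.sum_nonneg fun i _ => indicator_nonneg (fun _ _ => zero_le_one) _
    rw [norm_of_nonneg (exp_pos _).le, exp_le_one_iff]
    nlinarith
  have hB : 0 < 1 - distFun μ ξ + distFun μ ξ * exp (-t) := by
    have := exp_pos (-t)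
    nlinarith [distFun_le_one μ ξ, exp_le_one_iff.2 (neg_nonpos.2 ht)]
  calc _ ≤ (Measure.pi fun _ : Fin n => μ).real {ω | S ω ≤ q * n} := measureReal_mono hsub
    _ ≤ exp (-(-t) * (q * n)) * mgf S (Measure.pi fun _ => μ) (-t) :=
        measure_le_le_exp_mul_mgf _ (neg_nonpos.2 ht) hint
    _ = _ := by
        rw [mgf_sum_indicator_Iic_pi, chernoffExponent, mul_add, exp_add, ← log_pow,
          exp_log (pow_pos hB n)]
        ring_nf

noncomputable def bernoulliKL (q p : ℝ) : ℝ := q * log (q / p) + (1 - q) * log ((1 - q) / (1 - p))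

lemma bernoulliKL_self (q : ℝ) : bernoulliKL q q = 0 := by
  simp [bernoulliKL]

lemma hasDerivAt_bernoulliKL {q x : ℝ} (hq0 : 0 < q) (hq1 : q < 1) (hx0 : 0 < x) (hx1 : x < 1) :
    HasDerivAt (bernoulliKL q) ((x - q) / (x * (1 - x))) x := by
  have h1 : HasDerivAt (fun y => q / y) (-q / x ^ 2) x := by
    simpa [div_eq_mul_inv, neg_div] using (hasDerivAt_inv hx0.ne').const_mul q
  have h2 : HasDerivAt (fun y => (1 - q) / (1 - y)) ((1 - q) / (1 - x) ^ 2) x := by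
    simpa [div_eq_mul_inv] using ((hasDerivAt_inv (sub_ne_zero.2 hx1.ne')).comp x
      ((hasDerivAt_id' x).const_sub 1)).const_mul (1 - q)
  have h1q : 0 < 1 - q := by linarith
  have h1x : 0 < 1 - x := by linarith
  refine (((h1.log (by positivity)).const_mul q).add
    ((h2.log (by positivity)).const_mul (1 - q))).congr_deriv ?_
  field_simp
  ring

lemma le_bernoulliKL_of_hasDerivAt {q p : ℝ} {G G' : ℝ → ℝ} (hq : 0 < q) (hqp : q ≤ p)
    (hp : p < 1) (hGc : ContinuousOn G (Icc q p)) (hG : ∀ x ∈ Ioo q p, HasDerivAt G (G' x) x)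
    (hG' : ∀ x ∈ Ioo q p, G' x ≤ (x - q) / (x * (1 - x))) (hGq : G q = 0) :
    G p ≤ bernoulliKL q p := by
  have hKL : ∀ x ∈ Icc q p, HasDerivAt (bernoulliKL q) ((x - q) / (x * (1 - x))) x :=
    fun x hx => hasDerivAt_bernoulliKL hq (by linarith) (by linarith [hx.1]) (by linarith [hx.2])
  have hmono : MonotoneOn (fun x => bernoulliKL q x - G x) (Icc q p) := by
    refine monotoneOn_of_hasDerivWithinAt_nonneg (convex_Icc q p)
      ((HasDerivAt.continuousOn hKL).sub hGc) (f' := fun x => (x - q) / (x * (1 - x)) - G' x)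
      (fun x hx => ?_) fun x hx => ?_
    · rw [interior_Icc] at hx
      exact ((hKL x (Ioo_subset_Icc_self hx)).sub (hG x hx)).hasDerivWithinAt
    · rw [interior_Icc] at hx
      exact sub_nonneg.2 (hG' x hx)
  simpa [bernoulliKL_self, hGq] using hmono (left_mem_Icc.2 hqp) (right_mem_Icc.2 hqp) hqp

lemma two_mul_sq_le_bernoulliKL {q p : ℝ} (hq : 0 < q) (hqp : q ≤ p) (hp : p < 1) :
    2 * (p - q) ^ 2 ≤ bernoulliKL q p := by
  refine le_bernoulliKL_of_hasDerivAt (G := fun x => 2 * (x - q) ^ 2) (G' := fun x => 4 * (x - q))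
    hq hqp hp (by fun_prop) (fun x _ => ?_) (fun x hx => ?_) (by simp)
  · refine ((((hasDerivAt_id' x).sub_const q).fun_pow 2).const_mul 2).congr_deriv ?_
    push_cast
    ring
  · have hx' : 0 < x * (1 - x) := mul_pos (by linarith [hx.1]) (by linarith [hx.2])
    rw [le_div_iff₀ hx']
    nlinarith [hx.1, sq_nonneg (1 - 2 * x)]

lemma sq_div_two_mul_le_bernoulliKL {q p : ℝ} (hq : 0 < q) (hqp : q ≤ p) (hp : p < 1) :
    (p - q) ^ 2 / (2 * p) ≤ bernoulliKL q p := by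
  have hp0 : 0 < p := hq.trans_le hqp
  refine le_bernoulliKL_of_hasDerivAt (G := fun x => (x - q) ^ 2 / (2 * p))
    (G' := fun x => (x - q) / p) hq hqp hp (by fun_prop) (fun x _ => ?_) (fun x hx => ?_) (by simp)
  · refine ((((hasDerivAt_id' x).sub_const q).fun_pow 2).div_const (2 * p)).congr_deriv ?_
    field_simp
    push_cast
    ring
  · have hx0 : 0 < x := by linarith [hx.1]
    exact div_le_div_of_nonneg_left (by linarith [hx.1]) (mul_pos hx0 (by linarith [hx.2]))
      (by nlinarith [hx.2])

lemma exists_chernoffExponent_le_of_le_bernoulliKL {q p K : ℝ} (hq : 0 < q) (hqp : q ≤ p)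
    (hp : p < 1) (hK : K ≤ bernoulliKL q p) : ∃ t ≥ 0, chernoffExponent q p t ≤ -K := by
  have hp0 : 0 < p := hq.trans_le hqp
  have h1q : 0 < 1 - q := by linarith
  have h1p : 0 < 1 - p := by linarith
  have hr : 0 < p * (1 - q) / (q * (1 - p)) := by positivity
  -- the minimiser of `chernoffExponent q p`
  refine ⟨log (p * (1 - q) / (q * (1 - p))), log_nonneg ?_, le_of_eq_of_le ?_ (neg_le_neg hK)⟩
  · rw [le_div_iff₀ (by nlinarith)]
    nlinarith
  · have hbase : 1 - p + p * (p * (1 - q) / (q * (1 - p)))⁻¹ = (1 - p) / (1 - q) := by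
      field_simp
      ring
    rw [chernoffExponent, exp_neg, exp_log hr, hbase, bernoulliKL]
    simp only [log_div, log_mul, hq.ne', hp0.ne', h1q.ne', h1p.ne', ne_eq, not_false_eq_true,
      mul_ne_zero_iff, and_self]
    ring

lemma exp_le_one_add_add_sq_div {t : ℝ} (ht0 : 0 ≤ t) (ht3 : t < 3) :
    exp t ≤ 1 + t + t ^ 2 / (2 * (1 - t / 3)) := by
  set g : ℝ → ℝ := fun s => (1 + s + s ^ 2 / (2 * (1 - s / 3))) * exp (-s)
  have hden : ∀ s ∈ Icc 0 t, 2 * (1 - s / 3) ≠ 0 := fun s hs => by linarith [hs.2]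
  have hg : ∀ s ∈ Icc 0 t, HasDerivAt g (s ^ 3 / (18 * (1 - s / 3) ^ 2) * exp (-s)) s := by
    intro s hs
    have hpoly := (((hasDerivAt_id' s).const_add 1).fun_add (((hasDerivAt_id' s).fun_pow 2).fun_div
      ((((hasDerivAt_id' s).div_const 3).const_sub 1).const_mul 2) (hden s hs)))
    refine (hpoly.fun_mul ((hasDerivAt_neg' s).exp)).congr_deriv ?_
    have : (3 : ℝ) - s ≠ 0 := by linarith [hs.2]
    field_simp
    ring
  have hmono : MonotoneOn g (Icc 0 t) := by
    refine monotoneOn_of_hasDerivWithinAt_nonneg (convex_Icc 0 t) (HasDerivAt.continuousOn hg)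
      (fun s hs => (hg s (interior_subset hs)).hasDerivWithinAt) fun s hs => ?_
    rw [interior_Icc] at hs
    have := hs.1
    positivity
  have h : g 0 ≤ g t := hmono (left_mem_Icc.2 ht0) (right_mem_Icc.2 ht0) ht0
  rw [show g 0 = 1 by simp [g]] at h
  simp only [g, exp_neg] at h
  rwa [le_mul_inv_iff₀ (exp_pos t), one_mul] at h

lemma exists_chernoffExponent_le_bernstein {q p : ℝ} (hqp : q ≤ p) (hp : p < 1) :
    ∃ t ≥ 0, chernoffExponent q p t ≤ -((p - q) ^ 2 / (2 * (1 - p) + 2 / 3 * (p - q))) := by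
  have h1p : 0 < 1 - p := by linarith
  have hD : 0 < 3 * (1 - p) + (p - q) := by linarith
  set t := 3 * (p - q) / (3 * (1 - p) + (p - q)) with ht
  have ht0 : 0 ≤ t := div_nonneg (by linarith) hD.le
  have ht3 : t < 3 := by rw [ht, div_lt_iff₀ hD]; linarith
  have hpos : 0 < p + (1 - p) * exp t := by
    nlinarith [mul_nonneg h1p.le (sub_nonneg.2 (one_le_exp ht0))]
  have hlog : log (1 - p + p * exp (-t)) = -t + log (p + (1 - p) * exp t) := by
    rw [show 1 - p + p * exp (-t) = exp (-t) * (p + (1 - p) * exp t) by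
      rw [exp_neg]; field_simp; ring, log_mul (exp_pos _).ne' hpos.ne', log_exp]
  have hexp := exp_le_one_add_add_sq_div ht0 ht3
  refine ⟨t, ht0, ?_⟩
  calc chernoffExponent q p t ≤ -t * (p - q) + (1 - p) * (t ^ 2 / (2 * (1 - t / 3))) := by
        rw [chernoffExponent, hlog]
        nlinarith [log_le_sub_one_of_pos hpos]
    _ = _ := by
        rw [ht]
        field_simp
        ring

lemma exists_chernoffExponent_one_le {q K : ℝ} (hq : q < 1) (hK : 0 ≤ K) :
    ∃ t ≥ 0, chernoffExponent q 1 t ≤ -K := by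
  have h1q : 0 < 1 - q := by linarith
  refine ⟨K / (1 - q), div_nonneg hK h1q.le, le_of_eq ?_⟩
  simp only [chernoffExponent, sub_self, one_mul, zero_add, Real.log_exp]
  field_simp
  ring

theorem stmt11 (μ : Measure ℝ) [IsProbabilityMeasure μ]
    (n : ℕ) (q : ℝ) (hq0 : 0 < q) (hq1 : q < 1)
    (ξ : ℝ) (hξ : quantile μ q < ξ)
    (δ₁ : ℝ) (hδ₁ : δ₁ = distFun μ ξ - q) :
    ((Measure.pi fun _ : Fin n => μ) {ω | ξ < empQuantile ω q}).toReal ≤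
        Real.exp (-2 * n * δ₁ ^ 2) ∧
    ((Measure.pi fun _ : Fin n => μ) {ω | ξ < empQuantile ω q}).toReal ≤
        Real.exp (-(n * δ₁ ^ 2) / (2 * (1 - distFun μ ξ) + 2 / 3 * δ₁)) ∧
    ((Measure.pi fun _ : Fin n => μ) {ω | ξ < empQuantile ω q}).toReal ≤
        Real.exp (-(n * δ₁ ^ 2) / (2 * distFun μ ξ)) := by
  subst hδ₁
  set p := distFun μ ξ
  have hqp : q ≤ p := le_distFun_of_quantile_lt μ hq0 hq1 hξ
  have hp1 : p ≤ 1 := distFun_le_one μ ξ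
  have hbound : ∀ K E : ℝ, E = -(n * K) → (∃ t ≥ 0, chernoffExponent q p t ≤ -K) →
      ((Measure.pi fun _ : Fin n => μ) {ω | ξ < empQuantile ω q}).toReal ≤ exp E := by
    rintro K E rfl ⟨t, ht, hK⟩
    calc _ ≤ (Measure.pi fun _ : Fin n => μ).real {ω | empDistFun ω ξ < q} :=
          measureReal_mono fun ω => empDistFun_lt_of_lt_empQuantile hq0
      _ ≤ exp (n * chernoffExponent q p t) := measureReal_empDistFun_lt_le μ n ξ q ht
      _ ≤ exp (-(n * K)) := exp_le_exp.2 (by nlinarith [(Nat.cast_nonneg n : (0 : ℝ) ≤ n)])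
  obtain ⟨h₁, h₂, h₃⟩ : (∃ t ≥ 0, chernoffExponent q p t ≤ -(2 * (p - q) ^ 2)) ∧
      (∃ t ≥ 0, chernoffExponent q p t ≤ -((p - q) ^ 2 / (2 * (1 - p) + 2 / 3 * (p - q)))) ∧
      (∃ t ≥ 0, chernoffExponent q p t ≤ -((p - q) ^ 2 / (2 * p))) := by
    rcases hp1.lt_or_eq with hp1 | hp1
    · exact ⟨exists_chernoffExponent_le_of_le_bernoulliKL hq0 hqp hp1
          (two_mul_sq_le_bernoulliKL hq0 hqp hp1),
        exists_chernoffExponent_le_bernstein hqp hp1,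
        exists_chernoffExponent_le_of_le_bernoulliKL hq0 hqp hp1
          (sq_div_two_mul_le_bernoulliKL hq0 hqp hp1)⟩
    · have hK : ∀ K ≥ 0, ∃ t ≥ 0, chernoffExponent q p t ≤ -K :=
        fun K hK => hp1 ▸ exists_chernoffExponent_one_le hq1 hK
      have hδ : 0 ≤ p - q := sub_nonneg.2 hqp
      exact ⟨hK _ (by positivity), hK _ (div_nonneg (sq_nonneg _) (by linarith)),
        hK _ (div_nonneg (sq_nonneg _) (by linarith))⟩
  exact ⟨hbound _ _ (by ring) h₁, hbound _ _ (by ring) h₂, hbound _ _ (by ring) h₃⟩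
end

section
/- Let X be a real random variable, let X₁,…,X_n be i.i.d. copies of X, let 0 < p < 1, and let D_n = max_{i=1,…,n} X_i − min_{i=1,…,n} X_i denote the empirical range. Then ℙⁿ(D_n < ξ_p − ξ_{1−p}) ≤ 2·exp(−n(1−p)/2), where ξ_q denotes the q-quantile of X. -/
/-!
The event `D_n < ξ_p - ξ_{1-p}` forces all samples to lie below `ξ_p` or all of them to lie above
`ξ_{1-p}`. Each sample does so with probability at most `p`: `ℙ(X < ξ_p) ≤ p` because
`𝔽 < p` to the left of `ξ_p`, and `ℙ(X > ξ_{1-p}) ≤ p` because right-continuity of `𝔽` gives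
`𝔽(ξ_{1-p}) ≥ 1 - p`. Hence the probability is at most `2 pⁿ ≤ 2 exp(-n(1-p))`.
-/

open MeasureTheory Real

open ProbabilityTheory Set

namespace ProbabilityTheory

variable (μ : Measure ℝ) [IsProbabilityMeasure μ] {q : ℝ}

lemma distFun_eq_cdf : distFun μ = cdf μ := by
  ext ξ
  rw [distFun, cdf_eq_real, measureReal_def]

lemma bddBelow_setOf_le_distFun (hq : 0 < q) : BddBelow {ξ | q ≤ distFun μ ξ} := by
  obtain ⟨ξ₀, hξ₀⟩ := ((tendsto_cdf_atBot μ).eventually (gt_mem_nhds hq)).exists_forall_of_atBot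
  refine ⟨ξ₀, fun ξ (hξ : q ≤ distFun μ ξ) => le_of_not_gt fun hlt => ?_⟩
  rw [distFun_eq_cdf] at hξ
  linarith [hξ₀ ξ hlt.le]

lemma nonempty_setOf_le_distFun (hq : q < 1) : {ξ | q ≤ distFun μ ξ}.Nonempty := by
  obtain ⟨ξ, hξ⟩ := ((tendsto_cdf_atTop μ).eventually (lt_mem_nhds hq)).exists
  exact ⟨ξ, show q ≤ distFun μ ξ by rw [distFun_eq_cdf]; exact hξ.le⟩

lemma distFun_lt_of_lt_quantile (hq : 0 < q) {ξ : ℝ} (hξ : ξ < quantile μ q) :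
    distFun μ ξ < q :=
  not_le.1 (notMem_of_lt_csInf (s := {ξ | q ≤ distFun μ ξ}) hξ (bddBelow_setOf_le_distFun μ hq))

lemma le_distFun_quantile (hq : q < 1) : q ≤ distFun μ (quantile μ q) := by
  rw [distFun_eq_cdf]
  refine ge_of_tendsto (((cdf μ).right_continuous _).mono Ioi_subset_Ici_self) ?_
  filter_upwards [self_mem_nhdsWithin] with ξ hξ
  obtain ⟨s, hs : q ≤ distFun μ s, hsξ⟩ :=
    exists_lt_of_csInf_lt (nonempty_setOf_le_distFun μ hq) hξ
  rw [distFun_eq_cdf] at hs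
  exact hs.trans (monotone_cdf μ hsξ.le)

lemma measure_Iio_quantile_le (hq : 0 < q) :
    μ (Iio (quantile μ q)) ≤ ENNReal.ofReal q := by
  have h := (cdf μ).measure_Iio (tendsto_cdf_atBot μ) (quantile μ q)
  rw [measure_cdf, sub_zero] at h
  refine h ▸ ENNReal.ofReal_le_ofReal (le_of_tendsto ((monotone_cdf μ).tendsto_leftLim _) ?_)
  filter_upwards [self_mem_nhdsWithin] with ξ (hξ : ξ < quantile μ q)
  rw [← distFun_eq_cdf]
  exact (distFun_lt_of_lt_quantile μ hq hξ).le

lemma measure_Ioi_quantile_one_sub_le {p : ℝ} (hp : 0 < p) :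
    μ (Ioi (quantile μ (1 - p))) ≤ ENNReal.ofReal p := by
  have h := (cdf μ).measure_Ioi (tendsto_cdf_atTop μ) (quantile μ (1 - p))
  rw [measure_cdf] at h
  have := le_distFun_quantile μ (q := 1 - p) (by linarith)
  rw [distFun_eq_cdf] at this
  exact h ▸ ENNReal.ofReal_le_ofReal (by linarith)

end ProbabilityTheory

lemma setOf_ciSup_sub_ciInf_lt_subset {ι : Type*} [Finite ι] (a b : ℝ) :
    {ω : ι → ℝ | (⨆ i, ω i) - (⨅ i, ω i) < a - b} ⊆
      (univ.pi fun _ => Iio a) ∪ (univ.pi fun _ => Ioi b) := by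
  intro ω hω
  by_cases hsup : (⨆ i, ω i) < a
  · exact Or.inl fun i _ => (le_ciSup (finite_range ω).bddAbove i).trans_lt hsup
  · refine Or.inr fun i _ => ?_
    have : b < ⨅ i, ω i := by linarith [show _ < a - b from hω]
    exact this.trans_le (ciInf_le (finite_range ω).bddBelow i)

lemma MeasureTheory.Measure.pi_univ_pi_const_le {ι α : Type*} [Fintype ι] [MeasurableSpace α]
    (μ : Measure α) [SigmaFinite μ] {s : Set α} {c : ENNReal} (hs : μ s ≤ c) :
    Measure.pi (fun _ : ι => μ) (univ.pi fun _ => s) ≤ c ^ Fintype.card ι := by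
  rw [Measure.pi_pi, Finset.prod_const, Finset.card_univ]
  exact pow_le_pow_left' hs _

lemma Real.pow_le_exp_neg_mul_one_sub {p : ℝ} (hp : 0 ≤ p) (n : ℕ) :
    p ^ n ≤ exp (-(n * (1 - p))) := by
  calc p ^ n ≤ exp (-(1 - p)) ^ n := by
        gcongr
        simpa using one_sub_le_exp_neg (1 - p)
    _ = exp (-(n * (1 - p))) := by rw [← exp_nat_mul, mul_neg]

theorem stmt13_general (μ : Measure ℝ) [IsProbabilityMeasure μ]
    (n : ℕ) (p : ℝ) (hp0 : 0 < p) (hp1 : p < 1) :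
    ((Measure.pi fun _ : Fin n => μ)
        {ω | (⨆ i, ω i) - (⨅ i, ω i) < quantile μ p - quantile μ (1 - p)}).toReal ≤
      2 * Real.exp (-(n * (1 - p)) / 2) := by
  have hmeas : (Measure.pi fun _ : Fin n => μ)
      {ω | (⨆ i, ω i) - (⨅ i, ω i) < quantile μ p - quantile μ (1 - p)} ≤
        2 * ENNReal.ofReal p ^ n := by
    calc _ ≤ _ := measure_mono (setOf_ciSup_sub_ciInf_lt_subset _ _)
      _ ≤ _ := measure_union_le _ _
      _ ≤ ENNReal.ofReal p ^ n + ENNReal.ofReal p ^ n := by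
          simpa only [Fintype.card_fin] using add_le_add
            (μ.pi_univ_pi_const_le (ι := Fin n) (measure_Iio_quantile_le μ hp0))
            (μ.pi_univ_pi_const_le (ι := Fin n) (measure_Ioi_quantile_one_sub_le μ hp0))
      _ = 2 * ENNReal.ofReal p ^ n := (two_mul _).symm
  calc _ ≤ (2 * ENNReal.ofReal p ^ n).toReal := ENNReal.toReal_mono (by finiteness) hmeas
    _ = 2 * p ^ n := by simp [ENNReal.toReal_ofReal hp0.le]
    _ ≤ 2 * exp (-(n * (1 - p))) := by gcongr; exact pow_le_exp_neg_mul_one_sub hp0.le n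
    _ ≤ 2 * Real.exp (-(n * (1 - p)) / 2) := by
        gcongr
        have : 0 ≤ (n : ℝ) * (1 - p) := mul_nonneg n.cast_nonneg (by linarith)
        linarith

/-- The empirical range `D_n = max_i X_i - min_i X_i` of `n` i.i.d. samples is at least
`ξ_p - ξ_{1-p}` except with probability `2·exp(-n(1-p)/2)`. -/
theorem stmt13 (μ : Measure ℝ) [IsProbabilityMeasure μ]
    (n : ℕ) (hn : 0 < n) (p : ℝ) (hp0 : 0 < p) (hp1 : p < 1) :
    ((Measure.pi fun _ : Fin n => μ)
        {ω | (⨆ i, ω i) - (⨅ i, ω i) < quantile μ p - quantile μ (1 - p)}).toReal ≤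
      2 * Real.exp (-(n * (1 - p)) / 2) :=
  stmt13_general μ n p hp0 hp1
end
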